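/- arXiv:2011.02741 — 4 statements merged into one kernel-verified Lean document; each statement's English description precedes it below -/
import Mathlib

section
/- Let (X, G, Φ) be a dynamical system where X is a compact metric space. Then (X, G, Φ) is mixing if and only if (X, G, Φ) is a factor of the inverse limit of an inverse system of dynamical systems, satisfying the Mittag-Leffler condition, each of whose terms is a mixing subshift (a closed shift-invariant subset of a full shift over some finite alphabet, with the shift G-action). -/
open Set

universe u

/-! ### Dynamical systems: actions of a countable discrete group by homeomorphisms -/

/-- An action of a group `G` on a topological space `X`: each `act g` is a homeomorphism
(continuity of the inverse follows from `act g⁻¹`). -/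
structure DynAction (G X : Type u) [Group G] [TopologicalSpace X] where
  act : G → X → X
  continuous_act : ∀ g : G, Continuous (act g)
  act_one : ∀ x : X, act 1 x = x
  act_mul : ∀ (g g' : G) (x : X), act (g * g') x = act g (act g' x)

section Covers

variable {G X : Type u} [Group G] [TopologicalSpace X]

/-- A finite open cover of `X`. -/
def IsFOC (𝒰 : Finset (Set X)) : Prop :=
  (∀ U ∈ 𝒰, IsOpen U) ∧ ⋃₀ (𝒰 : Set (Set X)) = Set.univ

/-- A finite partition of `X` into nonempty clopen sets. -/
def IsClopenPartition (𝒰 : Finset (Set X)) : Prop :=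
  (∀ U ∈ 𝒰, IsClopen U ∧ U.Nonempty) ∧ ⋃₀ (𝒰 : Set (Set X)) = Set.univ ∧
    ∀ U ∈ 𝒰, ∀ V ∈ 𝒰, U ≠ V → U ∩ V = ∅

/-- `𝒱` refines `𝒰`: every member of `𝒱` is contained in a member of `𝒰`. -/
def Refines (𝒱 𝒰 : Finset (Set X)) : Prop :=
  ∀ V ∈ 𝒱, ∃ U ∈ 𝒰, V ⊆ U

/-- `{U g}` is a pattern of the `(S,𝒰)`-pseudo-orbit `{x g}`:
all `U g` belong to `𝒰`, and `x (s*g) ∈ U (s*g)` and `Φ_s (x g) ∈ U (s*g)`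
for all `g ∈ G`, `s ∈ S`. -/
def IsPseudoOrbitPattern (Φ : DynAction G X) (S : Set G) (𝒰 : Finset (Set X))
    (x : G → X) (U : G → Set X) : Prop :=
  (∀ g : G, U g ∈ 𝒰) ∧
    ∀ g : G, ∀ s ∈ S, x (s * g) ∈ U (s * g) ∧ Φ.act s (x g) ∈ U (s * g)

/-- `{x g}` is an `(S,𝒰)`-pseudo-orbit. -/
def IsPseudoOrbit (Φ : DynAction G X) (S : Set G) (𝒰 : Finset (Set X)) (x : G → X) : Prop :=
  ∃ U : G → Set X, IsPseudoOrbitPattern Φ S 𝒰 x U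

/-- `z` `𝒰`-shadows the family `{x g}`. -/
def Shadows (Φ : DynAction G X) (𝒰 : Finset (Set X)) (z : X) (x : G → X) : Prop :=
  ∀ g : G, ∃ U ∈ 𝒰, Φ.act g z ∈ U ∧ x g ∈ U

/-- The (topological) `S`-shadowing property. -/
def ShadowingProperty (Φ : DynAction G X) (S : Set G) : Prop :=
  ∀ 𝒰 : Finset (Set X), IsFOC 𝒰 → ∃ 𝒱 : Finset (Set X), IsFOC 𝒱 ∧
    ∀ x : G → X, IsPseudoOrbit Φ S 𝒱 x → ∃ z : X, Shadows Φ 𝒰 z x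

/-! ### Equivariant maps, factor maps, conjugacies -/

def IsEquivariant {Y : Type u} [TopologicalSpace Y]
    (ΦX : DynAction G X) (ΦY : DynAction G Y) (f : X → Y) : Prop :=
  ∀ (g : G) (x : X), f (ΦX.act g x) = ΦY.act g (f x)

/-- `f` is a factor map from `(X,G,ΦX)` onto `(Y,G,ΦY)`. -/
def IsFactorMap {Y : Type u} [TopologicalSpace Y]
    (ΦX : DynAction G X) (ΦY : DynAction G Y) (f : X → Y) : Prop :=
  Continuous f ∧ Function.Surjective f ∧ IsEquivariant ΦX ΦY f

/-- `f` is a conjugacy (bijective factor map). -/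
def IsConjugacy {Y : Type u} [TopologicalSpace Y]
    (ΦX : DynAction G X) (ΦY : DynAction G Y) (f : X → Y) : Prop :=
  Continuous f ∧ Function.Bijective f ∧ IsEquivariant ΦX ΦY f

end Covers

/-! ### Shifts, subshifts, shifts of finite type -/

/-- The shift action on `A^G`: `(σ_g x) h = x (h * g)`. -/
def shift (G A : Type u) [Group G] (g : G) (x : G → A) : G → A :=
  fun h => x (h * g)

/-- The full shift `A^G` (product topology) as a dynamical system. -/
def shiftDyn (G A : Type u) [Group G] [TopologicalSpace A] : DynAction G (G → A) where
  act := shift G A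
  continuous_act g := continuous_pi fun h => continuous_apply (h * g)
  act_one x := by funext h; simp [shift]
  act_mul g g' x := by funext h; simp [shift, mul_assoc]

/-- A subshift: a closed shift-invariant subset of the full shift `A^G`. -/
def IsSubshift {G A : Type u} [Group G] [TopologicalSpace A] (Y : Set (G → A)) : Prop :=
  IsClosed Y ∧ ∀ g : G, ∀ x ∈ Y, shift G A g x ∈ Y

/-- The cylinder set determined by the values of `P` on the finite shape `B`. -/
def cylinder {G A : Type u} (B : Finset G) (P : G → A) : Set (G → A) :=
  {y | ∀ b ∈ B, y b = P b}

/-- The language of `Y ⊆ A^G` over the finite shape `B` (a pattern is recorded by any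
function `G → A` with the prescribed values on `B`). -/
def language {G A : Type u} (B : Finset G) (Y : Set (G → A)) : Set (G → A) :=
  {P | (cylinder B P ∩ Y).Nonempty}

/-- `Y` is a shift of finite type over the finite shape `B`: it is cut out by a family of
forbidden patterns on `B`. -/
def IsSFTOver {G A : Type u} [Group G] (B : Finset G) (Y : Set (G → A)) : Prop :=
  ∃ ℱ : Set (G → A), Y = {x | ∀ g : G, ∀ P ∈ ℱ, shift G A g x ∉ cylinder B P}

/-- The shift action restricted to a subshift. -/
def subshiftDyn {G A : Type u} [Group G] [TopologicalSpace A] (Y : Set (G → A))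
    (hY : IsSubshift Y) : DynAction G ↥Y where
  act g x := ⟨shift G A g x.1, hY.2 g x.1 x.2⟩
  continuous_act g := Continuous.subtype_mk
    ((continuous_pi fun h => continuous_apply (h * g)).comp continuous_subtype_val) _
  act_one x := by apply Subtype.ext; funext h; simp [shift]
  act_mul g g' x := by apply Subtype.ext; funext h; simp [shift, mul_assoc]

/-! ### Hitting time sets and mixing-type properties -/

section Mixing

variable {G X : Type u} [Group G] [TopologicalSpace X]

/-- The hitting time set `N(U,V) = {g ≠ e : U ∩ Φ_{g⁻¹}(V) ≠ ∅}`. -/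
def hittingTimes (Φ : DynAction G X) (U V : Set X) : Set G :=
  {g : G | g ≠ 1 ∧ (U ∩ Φ.act g⁻¹ '' V).Nonempty}

/-- Topological mixing: `G \ N(U,V)` is finite for all nonempty open `U, V`. -/
def IsMixing (Φ : DynAction G X) : Prop :=
  ∀ U V : Set X, IsOpen U → IsOpen V → U.Nonempty → V.Nonempty →
    ((hittingTimes Φ U V)ᶜ : Set G).Finite

/-- Minimality: there is no nonempty proper closed invariant subset. -/
def IsMinimal (Φ : DynAction G X) : Prop :=
  ∀ K : Set X, IsClosed K → (∀ g : G, ∀ x ∈ K, Φ.act g x ∈ K) →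
    K = ∅ ∨ K = Set.univ

end Mixing

/-! ### Inverse systems of subshifts -/

/-- An inverse system of dynamical systems whose terms are subshifts over finite
(discrete) alphabets, with the shift `G`-action. -/
structure SubshiftInvSys (G : Type u) [Group G] (Λ : Type u) [Preorder Λ] where
  A : Λ → Type u
  [topoA : ∀ l, TopologicalSpace (A l)]
  [discA : ∀ l, DiscreteTopology (A l)]
  [finA : ∀ l, Finite (A l)]
  Y : ∀ l : Λ, Set (G → A l)
  subshift : ∀ l : Λ, IsSubshift (Y l)
  bond : ∀ {l m : Λ}, l ≤ m → ↥(Y m) → ↥(Y l)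
  bond_cont : ∀ {l m : Λ} (h : l ≤ m), Continuous (bond h)
  bond_refl : ∀ (l : Λ) (x : ↥(Y l)), bond (le_refl l) x = x
  bond_comp : ∀ {l m n : Λ} (h1 : l ≤ m) (h2 : m ≤ n) (x : ↥(Y n)),
    bond h1 (bond h2 x) = bond (h1.trans h2) x
  bond_equivariant : ∀ {l m : Λ} (h : l ≤ m) (g : G) (x : ↥(Y m)),
    (subshiftDyn (Y l) (subshift l)).act g (bond h x)
      = bond h ((subshiftDyn (Y m) (subshift m)).act g x)

namespace SubshiftInvSys

variable {G Λ : Type u} [Group G] [Preorder Λ]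

instance (𝒮 : SubshiftInvSys G Λ) (l : Λ) : TopologicalSpace (𝒮.A l) := 𝒮.topoA l
instance (𝒮 : SubshiftInvSys G Λ) (l : Λ) : DiscreteTopology (𝒮.A l) := 𝒮.discA l
instance (𝒮 : SubshiftInvSys G Λ) (l : Λ) : Finite (𝒮.A l) := 𝒮.finA l

/-- The `G`-action on the term `Y l` (the restricted shift). -/
def termDyn (𝒮 : SubshiftInvSys G Λ) (l : Λ) : DynAction G ↥(𝒮.Y l) :=
  subshiftDyn (𝒮.Y l) (𝒮.subshift l)

/-- The inverse limit of the system, as a subset of the product. -/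
def limitSet (𝒮 : SubshiftInvSys G Λ) : Set (∀ l : Λ, ↥(𝒮.Y l)) :=
  {x | ∀ (l m : Λ) (h : l ≤ m), 𝒮.bond h (x m) = x l}

lemma act_mem_limitSet (𝒮 : SubshiftInvSys G Λ) (g : G) (x : ∀ l : Λ, ↥(𝒮.Y l))
    (hx : x ∈ 𝒮.limitSet) : (fun l => (𝒮.termDyn l).act g (x l)) ∈ 𝒮.limitSet := by
  intro l m h
  show 𝒮.bond h ((𝒮.termDyn m).act g (x m)) = (𝒮.termDyn l).act g (x l)
  rw [show (𝒮.termDyn m).act g (x m)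
        = (subshiftDyn (𝒮.Y m) (𝒮.subshift m)).act g (x m) from rfl,
      ← 𝒮.bond_equivariant h g (x m)]
  show (𝒮.termDyn l).act g (𝒮.bond h (x m)) = _
  rw [hx l m h]

/-- The induced `G`-action `σ*` on the inverse limit. -/
def limitDyn (𝒮 : SubshiftInvSys G Λ) : DynAction G ↥𝒮.limitSet where
  act g x := ⟨fun l => (𝒮.termDyn l).act g (x.1 l), 𝒮.act_mem_limitSet g x.1 x.2⟩
  continuous_act g := Continuous.subtype_mk
    (continuous_pi fun l => ((𝒮.termDyn l).continuous_act g).comp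
      ((continuous_apply l).comp continuous_subtype_val)) _
  act_one x := by
    apply Subtype.ext; funext l
    exact (𝒮.termDyn l).act_one (x.1 l)
  act_mul g g' x := by
    apply Subtype.ext; funext l
    exact (𝒮.termDyn l).act_mul g g' (x.1 l)

/-- The Mittag-Leffler condition. -/
def ML (𝒮 : SubshiftInvSys G Λ) : Prop :=
  ∀ l : Λ, ∃ m : Λ, ∃ h : l ≤ m, ∀ (n : Λ) (h' : m ≤ n),
    Set.range (𝒮.bond (h.trans h')) = Set.range (𝒮.bond h)

end SubshiftInvSys

/-- An inverse system of subshifts over some directed index set, packaged together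
with its (directed, preordered) index. -/
structure SubshiftInvSysPkg (G : Type u) [Group G] where
  Idx : Type u
  [pre : Preorder Idx]
  directed : IsDirected Idx (· ≤ ·)
  sys : SubshiftInvSys G Idx

namespace SubshiftInvSysPkg

variable {G : Type u} [Group G]

instance (P : SubshiftInvSysPkg G) : Preorder P.Idx := P.pre

end SubshiftInvSysPkg

/-!
Mixing passes to factors. An inverse limit of mixing subshifts satisfying the Mittag-Leffler
condition is mixing: by compactness every point of the stable image of a term in an earlier term
lifts to the limit, so the hitting times of basic open sets of the limit contain those of open
sets of a single term.

Conversely, code the orbits of a mixing compact metric system through the joins of finite covers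
by balls of radii `1, 1/2, …, (1/2)^n`. The subshift of itineraries realisable on every finite
window is mixing, since two windows are realised by a single orbit at all but finitely many
relative times; truncation maps between these subshifts are onto by compactness, so the
Mittag-Leffler condition holds; and a point of the inverse limit shadows a unique orbit of `X`,
which gives the factor map.
-/

section Mixing

variable {G X Y Z : Type u} [Group G] [TopologicalSpace X] [TopologicalSpace Y]
  [TopologicalSpace Z]

lemma mem_hittingTimes_iff {Φ : DynAction G X} {U V : Set X} {g : G} :
    g ∈ hittingTimes Φ U V ↔ g ≠ 1 ∧ ∃ x ∈ U, Φ.act g x ∈ V := by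
  have act_inv_act : ∀ x, Φ.act g⁻¹ (Φ.act g x) = x := fun x => by
    rw [← Φ.act_mul, inv_mul_cancel, Φ.act_one]
  have act_act_inv : ∀ x, Φ.act g (Φ.act g⁻¹ x) = x := fun x => by
    rw [← Φ.act_mul, mul_inv_cancel, Φ.act_one]
  refine and_congr_right fun _ => ⟨?_, ?_⟩
  · rintro ⟨x, hxU, v, hvV, rfl⟩
    exact ⟨_, hxU, by rwa [act_act_inv]⟩
  · rintro ⟨x, hxU, hxV⟩
    exact ⟨x, hxU, _, hxV, act_inv_act x⟩

lemma hittingTimes_mono {Φ : DynAction G X} {U U' V V' : Set X} (hU : U ⊆ U') (hV : V ⊆ V') :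
    hittingTimes Φ U V ⊆ hittingTimes Φ U' V' := by
  intro g hg
  obtain ⟨hg1, x, hxU, hxV⟩ := mem_hittingTimes_iff.mp hg
  exact mem_hittingTimes_iff.mpr ⟨hg1, x, hU hxU, hV hxV⟩

lemma hittingTimes_preimage_subset {ΦY : DynAction G Y} {ΦZ : DynAction G Z}
    {ΦX : DynAction G X} {p : Z → Y} {q : X → Y} (hp : IsEquivariant ΦZ ΦY p)
    (hq : IsEquivariant ΦX ΦY q) (hqp : range q ⊆ range p) (U V : Set Y) :
    hittingTimes ΦX (q ⁻¹' U) (q ⁻¹' V) ⊆ hittingTimes ΦZ (p ⁻¹' U) (p ⁻¹' V) := by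
  intro g hg
  obtain ⟨hg1, x, hxU, hxV⟩ := mem_hittingTimes_iff.mp hg
  obtain ⟨z, hz⟩ := hqp ⟨x, rfl⟩
  refine mem_hittingTimes_iff.mpr ⟨hg1, z, ?_, ?_⟩
  · rwa [mem_preimage, hz]
  · rwa [mem_preimage, hp, hz, ← hq]

lemma isMixing_of_subsingleton [Subsingleton X] (Φ : DynAction G X) : IsMixing Φ := by
  rintro U V - - ⟨x, hx⟩ ⟨v, hv⟩
  refine (finite_singleton (1 : G)).subset fun g hg => ?_
  by_contra hg1
  exact hg (mem_hittingTimes_iff.mpr ⟨hg1, x, hx, Subsingleton.elim v (Φ.act g x) ▸ hv⟩)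

lemma IsMixing.of_isFactorMap {ΦX : DynAction G X} {ΦY : DynAction G Y} {f : X → Y}
    (hf : IsFactorMap ΦX ΦY f) (hX : IsMixing ΦX) : IsMixing ΦY := by
  obtain ⟨hfc, hfs, hfe⟩ := hf
  intro U V hU hV hUne hVne
  refine (hX _ _ (hU.preimage hfc) (hV.preimage hfc) (hUne.preimage hfs)
    (hVne.preimage hfs)).subset (compl_subset_compl.mpr ?_)
  exact hittingTimes_preimage_subset (p := id) (fun _ _ => rfl) hfe
    (by rw [range_id]; exact subset_univ _) U V

end Mixing

namespace SubshiftInvSys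

variable {G Λ : Type u} [Group G] [Preorder Λ] (𝒮 : SubshiftInvSys G Λ)

instance compactSpace_term (l : Λ) : CompactSpace ↥(𝒮.Y l) :=
  isCompact_iff_compactSpace.mp (𝒮.subshift l).1.isCompact

lemma isEquivariant_bond {l m : Λ} (h : l ≤ m) :
    IsEquivariant (𝒮.termDyn m) (𝒮.termDyn l) (𝒮.bond h) :=
  fun g x => (𝒮.bond_equivariant h g x).symm

lemma isEquivariant_eval (l : Λ) :
    IsEquivariant 𝒮.limitDyn (𝒮.termDyn l) fun z => z.1 l :=
  fun _ _ => rfl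

lemma ML_of_surjective (h : ∀ {l m : Λ} (hlm : l ≤ m), Function.Surjective (𝒮.bond hlm)) :
    𝒮.ML := fun l =>
  ⟨l, le_rfl, fun _ _ => by rw [(h _).range_eq, (h _).range_eq]⟩

variable [IsDirected Λ (· ≤ ·)]

lemma exists_preimage_eval_subset [Nonempty Λ] {S : Set ↥𝒮.limitSet} (hS : IsOpen S)
    {y : ↥𝒮.limitSet} (hy : y ∈ S) : ∃ m, ∀ n, m ≤ n → ∃ W : Set ↥(𝒮.Y n), IsOpen W ∧ y.1 n ∈ W ∧
      (fun z : ↥𝒮.limitSet => z.1 n) ⁻¹' W ⊆ S := by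
  obtain ⟨S', hS', rfl⟩ := isOpen_induced_iff.mp hS
  obtain ⟨I, u, hIu, hpi⟩ := isOpen_pi_iff.mp hS' y.1 hy
  obtain ⟨m, hm⟩ := I.exists_le
  refine ⟨m, fun n hmn => ⟨⋂ l ∈ I, ⋂ h : l ≤ n, 𝒮.bond h ⁻¹' u l, ?_, ?_, ?_⟩⟩
  · exact isOpen_biInter_finset fun l hl =>
      isOpen_iInter_of_finite fun h => (hIu l hl).1.preimage (𝒮.bond_cont h)
  · simp only [mem_iInter, mem_preimage]
    intro l hl h
    rw [y.2 l n h]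
    exact (hIu l hl).2
  · intro z hz
    simp only [mem_preimage, mem_iInter] at hz
    refine hpi (mem_pi.mpr fun l hl => ?_)
    rw [← z.2 l n ((hm l hl).trans hmn)]
    exact hz l hl _

lemma range_bond_subset_range_eval {m m₁ : Λ} (h : m ≤ m₁)
    (hstab : ∀ n (h' : m₁ ≤ n), range (𝒮.bond (h.trans h')) = range (𝒮.bond h)) :
    range (𝒮.bond h) ⊆ range fun z : ↥𝒮.limitSet => z.1 m := by
  classical
  rintro _ ⟨v, rfl⟩
  have hlift : ∀ n (h' : m₁ ≤ n), ∃ w, 𝒮.bond (h.trans h') w = 𝒮.bond h v := fun n h' => by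
    rw [← mem_range, hstab n h']
    exact mem_range_self v
  have hne : ∀ l, Nonempty ↥(𝒮.Y l) := fun l => by
    obtain ⟨n, hln, hm₁n⟩ := directed_of (· ≤ ·) l m₁
    obtain ⟨w, -⟩ := hlift n hm₁n
    exact ⟨𝒮.bond hln w⟩
  let s : Set (∀ l, ↥(𝒮.Y l)) := {z | z m = 𝒮.bond h v}
  let t : Λ × Λ → Set (∀ l, ↥(𝒮.Y l)) := fun p =>
    {z | ∀ hp : p.1 ≤ p.2, 𝒮.bond hp (z p.2) = z p.1}
  have hs : IsCompact s := (isClosed_eq (continuous_apply m) continuous_const).isCompact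
  have ht : ∀ p, IsClosed (t p) := fun p => by
    simp only [t, ofPred_forall]
    exact isClosed_iInter fun hp =>
      isClosed_eq ((𝒮.bond_cont hp).comp (continuous_apply _)) (continuous_apply _)
  obtain ⟨z, hzs, hzt⟩ := hs.inter_iInter_nonempty t ht fun u => by
    have : Nonempty Λ := ⟨m⟩
    obtain ⟨n, hn⟩ := (insert m₁ (u.image Prod.fst ∪ u.image Prod.snd)).exists_le
    have hm₁n := hn m₁ (Finset.mem_insert_self _ _)
    obtain ⟨w, hw⟩ := hlift n hm₁n
    -- the relations indexed by `u` only involve indices below `n`; elsewhere any point will do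
    refine ⟨fun l => if hl : l ≤ n then 𝒮.bond hl w else Classical.arbitrary _, ?_, ?_⟩
    · simpa only [s, mem_ofPred_eq, dif_pos (h.trans hm₁n)] using hw
    · simp only [t, mem_iInter, mem_ofPred_eq]
      intro p hp hp'
      have h₁ : p.1 ≤ n := hn _ <| Finset.mem_insert_of_mem <|
        Finset.mem_union_left _ (Finset.mem_image_of_mem _ hp)
      have h₂ : p.2 ≤ n := hn _ <| Finset.mem_insert_of_mem <|
        Finset.mem_union_right _ (Finset.mem_image_of_mem _ hp)
      rw [dif_pos h₂, dif_pos h₁, 𝒮.bond_comp]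
  rw [mem_iInter] at hzt
  exact ⟨⟨z, fun l l' hll' => hzt (l, l') hll'⟩, hzs⟩

lemma isMixing_limitDyn (hML : 𝒮.ML) (hmix : ∀ l, IsMixing (𝒮.termDyn l)) :
    IsMixing 𝒮.limitDyn := by
  rcases isEmpty_or_nonempty Λ with hΛ | hΛ
  · have : Subsingleton ↥𝒮.limitSet := ⟨fun a b => Subtype.ext (funext isEmptyElim)⟩
    exact isMixing_of_subsingleton _
  rintro U V hU hV ⟨y, hy⟩ ⟨y', hy'⟩
  obtain ⟨m₀, hU'⟩ := 𝒮.exists_preimage_eval_subset hU hy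
  obtain ⟨m₀', hV'⟩ := 𝒮.exists_preimage_eval_subset hV hy'
  obtain ⟨m, hm₀, hm₀'⟩ := directed_of (· ≤ ·) m₀ m₀'
  obtain ⟨W₁, hW₁, hyW₁, hW₁U⟩ := hU' m hm₀
  obtain ⟨W₂, hW₂, hyW₂, hW₂V⟩ := hV' m hm₀'
  obtain ⟨m₁, h, hstab⟩ := hML m
  have hfin := hmix m₁ _ _ (hW₁.preimage (𝒮.bond_cont h)) (hW₂.preimage (𝒮.bond_cont h))
    ⟨y.1 m₁, by rwa [mem_preimage, y.2]⟩ ⟨y'.1 m₁, by rwa [mem_preimage, y'.2]⟩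
  refine hfin.subset (compl_subset_compl.mpr ?_)
  exact (hittingTimes_preimage_subset (𝒮.isEquivariant_eval m) (𝒮.isEquivariant_bond h)
    (𝒮.range_bond_subset_range_eval h hstab) W₁ W₂).trans (hittingTimes_mono hW₁U hW₂V)

end SubshiftInvSys

section CoverShift

variable {G X I J : Type u} [Group G] [TopologicalSpace X] (Φ : DynAction G X) (U : I → Set X)

def realizableOn (F : Finset G) : Set (G → I) :=
  {w | ∃ x, ∀ g ∈ F, Φ.act g x ∈ U (w g)}

/-- Itineraries through `U` realisable on every finite window, each window possibly by a
different orbit. -/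
def coverShift : Set (G → I) :=
  ⋂ F : Finset G, realizableOn Φ U F

variable {Φ U}

lemma mem_coverShift {w : G → I} :
    w ∈ coverShift Φ U ↔ ∀ F : Finset G, ∃ x, ∀ g ∈ F, Φ.act g x ∈ U (w g) :=
  mem_iInter

lemma isClosed_realizableOn [TopologicalSpace I] [DiscreteTopology I] (F : Finset G) :
    IsClosed (realizableOn Φ U F) := by
  have : realizableOn Φ U F = (fun w (g : F) => w g) ⁻¹'
      {v | ∃ x, ∀ g : F, Φ.act g x ∈ U (v g)} := by
    ext w
    exact exists_congr fun x => ⟨fun hx g => hx g g.2, fun hx g hg => hx ⟨g, hg⟩⟩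
  rw [this]
  exact (isClosed_discrete _).preimage (continuous_pi fun g => continuous_apply _)

variable (Φ U) in
lemma isSubshift_coverShift [TopologicalSpace I] [DiscreteTopology I] :
    IsSubshift (coverShift Φ U) := by
  classical
  refine ⟨isClosed_iInter isClosed_realizableOn, fun g w hw => mem_coverShift.mpr fun F => ?_⟩
  obtain ⟨x, hx⟩ := mem_coverShift.mp hw (F.image (· * g))
  refine ⟨Φ.act g x, fun h hh => ?_⟩
  rw [← Φ.act_mul]
  exact hx _ (Finset.mem_image_of_mem _ hh)

/-- Mixing of `Φ` lets the windows of two itineraries be realised by a single orbit at all but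
finitely many relative times; the remaining letters are filled in along that orbit. -/
lemma isMixing_coverShift [TopologicalSpace I] [DiscreteTopology I] (hΦ : IsMixing Φ)
    (hUo : ∀ i, IsOpen (U i)) (hU : ∀ x, ∃ i, x ∈ U i) :
    IsMixing (subshiftDyn (coverShift Φ U) (isSubshift_coverShift Φ U)) := by
  classical
  choose index hindex using hU
  rintro S T hS hT ⟨y, hy⟩ ⟨y', hy'⟩
  obtain ⟨S', hS', rfl⟩ := isOpen_induced_iff.mp hS
  obtain ⟨B, u, hBu, hS⟩ := isOpen_pi_iff.mp hS' y.1 hy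
  obtain ⟨T', hT', rfl⟩ := isOpen_induced_iff.mp hT
  obtain ⟨B', u', hBu', hT⟩ := isOpen_pi_iff.mp hT' y'.1 hy'
  let O (B : Finset G) (w : G → I) : Set X := ⋂ b ∈ B, Φ.act b ⁻¹' U (w b)
  have hO (B : Finset G) (w : G → I) : IsOpen (O B w) :=
    isOpen_biInter_finset fun b _ => (hUo _).preimage (Φ.continuous_act b)
  have hOne (B : Finset G) (w : ↥(coverShift Φ U)) : (O B w).Nonempty := by
    obtain ⟨x, hx⟩ := mem_coverShift.mp w.2 B
    exact ⟨x, mem_iInter₂.mpr hx⟩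
  refine ((hΦ _ _ (hO B y) (hO B' y') (hOne B y) (hOne B' y')).union
    ((B' ×ˢ B).image fun p => p.1⁻¹ * p.2).finite_toSet).subset fun g hg => ?_
  by_contra hgT
  simp only [mem_union, not_or, Finset.mem_coe, mem_compl_iff, not_not] at hgT
  obtain ⟨hg1, x, hxB, hgxB'⟩ := mem_hittingTimes_iff.mp hgT.1
  simp only [O, mem_iInter₂, mem_preimage, ← Φ.act_mul] at hxB hgxB'
  have hBB' : ∀ b' ∈ B', b' * g ∉ B := fun b' hb' hb => hgT.2 <|
    Finset.mem_image.mpr ⟨(b', b' * g), Finset.mem_product.mpr ⟨hb', hb⟩, inv_mul_cancel_left _ _⟩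
  let z : G → I := fun h =>
    if h ∈ B then y.1 h else if h * g⁻¹ ∈ B' then y'.1 (h * g⁻¹) else index (Φ.act h x)
  have hz : ∀ h, Φ.act h x ∈ U (z h) := fun h => by
    by_cases hB : h ∈ B
    · simpa only [z, if_pos hB] using hxB h hB
    by_cases hB' : h * g⁻¹ ∈ B'
    · simpa only [z, if_neg hB, if_pos hB', inv_mul_cancel_right] using hgxB' _ hB'
    · simpa only [z, if_neg hB, if_neg hB'] using hindex _
  refine hg (mem_hittingTimes_iff.mpr ⟨hg1, ⟨z, mem_coverShift.mpr fun _ => ⟨x, fun h _ => hz h⟩⟩,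
    hS (mem_pi.mpr fun b hb => ?_), hT (mem_pi.mpr fun b' hb' => ?_)⟩)
  · simpa only [z, Finset.mem_coe.mp hb, ↓reduceIte] using (hBu b hb).2
  · show z (b' * g) ∈ u' b'
    simpa only [z, hBB' b' hb', mul_inv_cancel_right, Finset.mem_coe.mp hb', ↓reduceIte]
      using (hBu' b' hb').2

lemma comp_mem_coverShift {V : J → Set X} {ρ : I → J} (hρ : ∀ i, U i ⊆ V (ρ i)) {w : G → I}
    (hw : w ∈ coverShift Φ U) : ρ ∘ w ∈ coverShift Φ V :=
  mem_coverShift.mpr fun F =>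
    (mem_coverShift.mp hw F).imp fun _ hx g hg => hρ _ (hx g hg)

lemma exists_comp_eq_of_mem_coverShift [TopologicalSpace I] [DiscreteTopology I] [Finite I]
    {V : J → Set X} {ρ : I → J} (hlift : ∀ j, ∀ x ∈ V j, ∃ i, ρ i = j ∧ x ∈ U i) {w : G → J}
    (hw : w ∈ coverShift Φ V) : ∃ w' ∈ coverShift Φ U, ρ ∘ w' = w := by
  classical
  have hpre : ∀ g, ∃ i, ρ i = w g := fun g => by
    obtain ⟨x, hx⟩ := mem_coverShift.mp hw {g}
    obtain ⟨i, hi, -⟩ := hlift _ _ (hx g (Finset.mem_singleton_self g))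
    exact ⟨i, hi⟩
  let s : Set (G → I) := ⋂ g, (fun w' => w' g) ⁻¹' (ρ ⁻¹' {w g})
  have hs : IsCompact s :=
    (isClosed_iInter fun g => (isClosed_discrete _).preimage (continuous_apply g)).isCompact
  obtain ⟨w', hw's, hw'U⟩ := hs.inter_iInter_nonempty _ isClosed_realizableOn fun u => by
    obtain ⟨x, hx⟩ := mem_coverShift.mp hw (u.sup id)
    have : ∀ g, ∃ i, ρ i = w g ∧ (g ∈ u.sup id → Φ.act g x ∈ U i) := fun g => by
      by_cases hg : g ∈ u.sup id
      · obtain ⟨i, hi, hxi⟩ := hlift _ _ (hx g hg)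
        exact ⟨i, hi, fun _ => hxi⟩
      · obtain ⟨i, hi⟩ := hpre g
        exact ⟨i, hi, fun h => absurd h hg⟩
    choose w' hw'ρ hw'U using this
    refine ⟨w', mem_iInter.mpr hw'ρ, mem_iInter₂.mpr fun F hF => ⟨x, fun g hg => hw'U g ?_⟩⟩
    exact Finset.le_sup (f := id) hF hg
  exact ⟨w', hw'U, funext (mem_iInter.mp hw's)⟩

end CoverShift

section CompactMetric

open Metric

variable {X : Type u} [MetricSpace X]

lemma dist_lt_of_mem_closedBall {c x x' : X} {r ε : ℝ} (hx : x ∈ closedBall c r)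
    (hx' : x' ∈ closedBall c r) (hr : r < ε / 2) : dist x x' < ε :=
  calc dist x x' ≤ dist x c + dist x' c := dist_triangle_right _ _ _
    _ ≤ r + r := add_le_add hx hx'
    _ < ε := by linarith

variable [CompactSpace X]

variable (X) in
noncomputable def net (j : ℕ) : Finset X :=
  (finite_cover_balls_of_compact (isCompact_univ (X := X))
    (by positivity : (0 : ℝ) < (1 / 2) ^ j)).choose_spec.2.1.toFinset

lemma exists_mem_net (j : ℕ) (x : X) : ∃ c ∈ net X j, x ∈ ball c ((1 / 2) ^ j) := by
  obtain ⟨-, -, hcover⟩ := (finite_cover_balls_of_compact (isCompact_univ (X := X))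
    (by positivity : (0 : ℝ) < (1 / 2) ^ j)).choose_spec
  simpa [net] using hcover (mem_univ x)

noncomputable def nearest (j : ℕ) (x : X) : net X j :=
  ⟨_, (exists_mem_net j x).choose_spec.1⟩

lemma mem_ball_nearest (j : ℕ) (x : X) : x ∈ ball (nearest j x : X) ((1 / 2) ^ j) :=
  (exists_mem_net j x).choose_spec.2

variable (X) in
/-- The alphabet of the level-`n` subshift. -/
abbrev NetChain (n : ℕ) : Type u := (j : Fin (n + 1)) → net X j

def chainBall {n : ℕ} (a : NetChain X n) : Set X :=
  ⋂ j, ball (a j : X) ((1 / 2) ^ (j : ℕ))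

def NetChain.truncate {n m : ℕ} (h : n ≤ m) (a : NetChain X m) : NetChain X n :=
  fun j => a (Fin.castLE (Nat.succ_le_succ h) j)

lemma isOpen_chainBall {n : ℕ} (a : NetChain X n) : IsOpen (chainBall a) :=
  isOpen_iInter_of_finite fun _ => isOpen_ball

lemma mem_chainBall_nearest (n : ℕ) (x : X) : x ∈ chainBall fun j : Fin (n + 1) => nearest j x :=
  mem_iInter.mpr fun j => mem_ball_nearest j x

lemma chainBall_subset_truncate {n m : ℕ} (h : n ≤ m) (a : NetChain X m) :
    chainBall a ⊆ chainBall (a.truncate h) := fun _ hx =>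
  mem_iInter.mpr fun j => mem_iInter.mp hx (Fin.castLE _ j)

lemma exists_truncate_eq {n m : ℕ} (h : n ≤ m) {b : NetChain X n} {x : X} (hx : x ∈ chainBall b) :
    ∃ a : NetChain X m, a.truncate h = b ∧ x ∈ chainBall a := by
  classical
  refine ⟨fun j => if hj : (j : ℕ) < n + 1 then b ⟨j, hj⟩ else nearest j x, ?_, ?_⟩
  · funext j
    simp [NetChain.truncate, j.2]
  · refine mem_iInter.mpr fun j => ?_
    dsimp only
    split_ifs with hj
    · exact mem_iInter.mp hx ⟨j, hj⟩
    · exact mem_ball_nearest j x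

end CompactMetric

section NetSystem

open Metric

variable {G X : Type} [Group G] [MetricSpace X] [CompactSpace X] (Φ : DynAction G X)

noncomputable def netSystem : SubshiftInvSys G ℕ where
  A := NetChain X
  Y _ := coverShift Φ chainBall
  subshift _ := isSubshift_coverShift Φ chainBall
  bond h w := ⟨NetChain.truncate h ∘ w.1, comp_mem_coverShift (chainBall_subset_truncate h) w.2⟩
  bond_cont h := ((continuous_pi fun g =>
    (continuous_of_discreteTopology (f := NetChain.truncate h)).comp (continuous_apply g)).comp
      continuous_subtype_val).subtype_mk _
  bond_refl _ _ := rfl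
  bond_comp _ _ _ := rfl
  bond_equivariant _ _ _ := rfl

lemma netSystem_ML : (netSystem Φ).ML :=
  SubshiftInvSys.ML_of_surjective _ fun h w => by
    obtain ⟨w', hw', hw'w⟩ :=
      exists_comp_eq_of_mem_coverShift (fun _ _ hx => exists_truncate_eq h hx) w.2
    exact ⟨⟨w', hw'⟩, Subtype.ext hw'w⟩

lemma isMixing_netSystem_termDyn (hΦ : IsMixing Φ) (n : ℕ) :
    IsMixing ((netSystem Φ).termDyn n) :=
  isMixing_coverShift hΦ isOpen_chainBall fun x => ⟨_, mem_chainBall_nearest n x⟩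

def letter (y : ↥(netSystem Φ).limitSet) (g : G) (j : ℕ) : net X j :=
  (y.1 j).1 g (Fin.last j)

lemma apply_eq_letter (y : ↥(netSystem Φ).limitSet) (n : ℕ) (g : G) (j : Fin (n + 1)) :
    (y.1 n).1 g j = letter Φ y g j :=
  congrFun (congrFun (congrArg Subtype.val (y.2 j n (Fin.is_le j))) g) (Fin.last j)

lemma exists_shadow (y : ↥(netSystem Φ).limitSet) :
    ∃ x, ∀ g j, Φ.act g x ∈ closedBall (letter Φ y g j : X) ((1 / 2) ^ j) := by
  classical
  obtain ⟨x, -, hx⟩ := isCompact_univ.inter_iInter_nonempty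
    (fun p : G × ℕ => Φ.act p.1 ⁻¹' closedBall (letter Φ y p.1 p.2 : X) ((1 / 2) ^ p.2))
    (fun p => isClosed_closedBall.preimage (Φ.continuous_act _)) fun u => by
      obtain ⟨x, hx⟩ := mem_coverShift.mp (y.1 (u.sup Prod.snd)).2 (u.image Prod.fst)
      refine ⟨x, mem_univ x, mem_iInter₂.mpr fun p hp => ?_⟩
      have := mem_iInter.mp (hx p.1 (Finset.mem_image_of_mem _ hp))
        ⟨p.2, Nat.lt_succ_of_le (Finset.le_sup hp)⟩
      rw [apply_eq_letter] at this
      exact ball_subset_closedBall this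
  exact ⟨x, fun g j => mem_iInter.mp hx (g, j)⟩

noncomputable def shadow (y : ↥(netSystem Φ).limitSet) : X :=
  (exists_shadow Φ y).choose

lemma act_shadow_mem (y : ↥(netSystem Φ).limitSet) (g : G) (j : ℕ) :
    Φ.act g (shadow Φ y) ∈ closedBall (letter Φ y g j : X) ((1 / 2) ^ j) :=
  (exists_shadow Φ y).choose_spec g j

lemma shadow_eq (y : ↥(netSystem Φ).limitSet) {x : X}
    (hx : ∀ j, x ∈ closedBall (letter Φ y 1 j : X) ((1 / 2) ^ j)) : shadow Φ y = x := by
  refine dist_le_zero.mp (le_of_forall_gt fun ε hε => ?_)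
  obtain ⟨j, hj⟩ := exists_pow_lt_of_lt_one (half_pos hε) (by norm_num : (1 / 2 : ℝ) < 1)
  have := act_shadow_mem Φ y 1 j
  rw [Φ.act_one] at this
  exact dist_lt_of_mem_closedBall this (hx j) hj

lemma continuous_shadow : Continuous (shadow Φ) := by
  refine continuous_iff_continuousAt.mpr fun y => Metric.tendsto_nhds.mpr fun ε hε => ?_
  obtain ⟨j, hj⟩ := exists_pow_lt_of_lt_one (half_pos hε) (by norm_num : (1 / 2 : ℝ) < 1)
  have hcont : Continuous fun y' : ↥(netSystem Φ).limitSet => letter Φ y' 1 j :=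
    (continuous_apply (Fin.last j)).comp <| (continuous_apply 1).comp <|
      continuous_subtype_val.comp <| (continuous_apply j).comp continuous_subtype_val
  have hopen : IsOpen {y' | letter Φ y' 1 j = letter Φ y 1 j} :=
    (isOpen_discrete {letter Φ y 1 j}).preimage hcont
  filter_upwards [hopen.mem_nhds rfl] with y' (hy' : letter Φ y' 1 j = letter Φ y 1 j)
  have h₁ := act_shadow_mem Φ y' 1 j
  have h₂ := act_shadow_mem Φ y 1 j
  rw [Φ.act_one, hy'] at h₁
  rw [Φ.act_one] at h₂
  exact dist_lt_of_mem_closedBall h₁ h₂ hj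

lemma isEquivariant_shadow : IsEquivariant (netSystem Φ).limitDyn Φ (shadow Φ) := fun g y =>
  shadow_eq Φ _ fun j => by
    have h := act_shadow_mem Φ y (1 * g) j
    rwa [Φ.act_mul, Φ.act_one] at h

lemma surjective_shadow : Function.Surjective (shadow Φ) := fun x =>
  ⟨⟨fun n => ⟨fun g j => nearest j (Φ.act g x),
      mem_coverShift.mpr fun _ => ⟨x, fun g _ => mem_chainBall_nearest n (Φ.act g x)⟩⟩,
    fun _ _ _ => rfl⟩,
  shadow_eq Φ _ fun j => ball_subset_closedBall <| by
    simpa only [letter, Fin.val_last, Φ.act_one] using mem_ball_nearest j (Φ.act 1 x)⟩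

lemma isFactorMap_shadow : IsFactorMap (netSystem Φ).limitDyn Φ (shadow Φ) :=
  ⟨continuous_shadow Φ, surjective_shadow Φ, isEquivariant_shadow Φ⟩

end NetSystem

theorem mixing_iff_factor_invlim_mixing_subshifts_general
    {G X : Type} [Group G] [MetricSpace X] [CompactSpace X]
    (Φ : DynAction G X) :
    IsMixing Φ ↔
      ∃ P : SubshiftInvSysPkg G,
        P.sys.ML ∧
        (∀ l : P.Idx, IsMixing (P.sys.termDyn l)) ∧
        ∃ f : ↥P.sys.limitSet → X, IsFactorMap P.sys.limitDyn Φ f := by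
  constructor
  · intro hΦ
    exact ⟨⟨ℕ, inferInstance, netSystem Φ⟩, netSystem_ML Φ, isMixing_netSystem_termDyn Φ hΦ,
      shadow Φ, isFactorMap_shadow Φ⟩
  · rintro ⟨P, hML, hmix, f, hf⟩
    have := P.directed
    exact (P.sys.isMixing_limitDyn hML hmix).of_isFactorMap hf

/-- **Theorem 1.5 (mixing case).** For a compact metric space, `Φ` is mixing iff
`(X,G,Φ)` is a factor of the inverse limit of an ML inverse system of mixing subshifts. -/
theorem mixing_iff_factor_invlim_mixing_subshifts
    {G X : Type} [Group G] [Countable G] [MetricSpace X] [CompactSpace X]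
    (Φ : DynAction G X) :
    IsMixing Φ ↔
      ∃ P : SubshiftInvSysPkg G,
        P.sys.ML ∧
        (∀ l : P.Idx, IsMixing (P.sys.termDyn l)) ∧
        ∃ f : ↥P.sys.limitSet → X, IsFactorMap P.sys.limitDyn Φ f :=
  mixing_iff_factor_invlim_mixing_subshifts_general Φ
end

section
/- Let (X, G, Φ) be a dynamical system where X is a compact metric space, and let S be a subset of G. Then Φ has the metric S-shadowing property if and only if for every finite open cover 𝒰 of X there exists a finite open cover 𝒱 of X such that every (S, 𝒱)-pseudo-orbit is 𝒰-shadowed by some point of X. -/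
open Set

universe u

/-! ### Metric shadowing -/

/-- `{x g}` is an `(S,δ)`-pseudo-orbit for the metric `d`. -/
def IsMetricPseudoOrbit {G X : Type u} [Group G] [MetricSpace X]
    (Φ : DynAction G X) (S : Set G) (δ : ℝ) (x : G → X) : Prop :=
  ∀ g : G, ∀ s ∈ S, dist (Φ.act s (x g)) (x (s * g)) < δ

/-- The metric `S`-shadowing property. -/
def MetricShadowing {G X : Type u} [Group G] [MetricSpace X]
    (Φ : DynAction G X) (S : Set G) : Prop :=
  ∀ ε : ℝ, 0 < ε → ∃ δ : ℝ, 0 < δ ∧ ∀ x : G → X,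
    IsMetricPseudoOrbit Φ S δ x → ∃ z : X, ∀ g : G, dist (Φ.act g z) (x g) < ε

/-! A cover whose members have diameter less than `δ` turns cover-closeness into `δ`-closeness,
and a cover with Lebesgue number `δ` turns `δ`-closeness into cover-closeness. On a compact
metric space both kinds of covers exist at every scale, so pseudo-orbits and shadowing
translate between the two languages in both directions. -/

open Metric

section CoverShadowing

variable {G X : Type u} [Group G] [MetricSpace X] {Φ : DynAction G X} {S : Set G}
  {𝒰 : Finset (Set X)} {ε : ℝ} {x : G → X} {z : X}

lemma exists_isFOC_forall_dist_lt [CompactSpace X] (hε : 0 < ε) :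
    ∃ 𝒰 : Finset (Set X), IsFOC 𝒰 ∧ ∀ U ∈ 𝒰, ∀ a ∈ U, ∀ b ∈ U, dist a b < ε := by
  classical
  obtain ⟨t, -, ht, hcover⟩ := finite_cover_balls_of_compact (isCompact_univ (X := X))
    (half_pos hε)
  refine ⟨ht.toFinset.image (ball · (ε / 2)), ⟨?_, ?_⟩, ?_⟩
  · simp only [Finset.mem_image, Set.Finite.mem_toFinset]
    rintro _ ⟨c, -, rfl⟩
    exact isOpen_ball
  · refine Set.eq_univ_of_univ_subset fun y hy => ?_
    obtain ⟨c, hc, hyc⟩ := Set.mem_iUnion₂.1 (hcover hy)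
    exact ⟨ball c (ε / 2), by simpa using ⟨c, hc, rfl⟩, hyc⟩
  · simp only [Finset.mem_image, Set.Finite.mem_toFinset]
    rintro _ ⟨c, -, rfl⟩ a ha b hb
    calc dist a b ≤ dist a c + dist b c := dist_triangle_right a b c
      _ < ε / 2 + ε / 2 := add_lt_add ha hb
      _ = ε := add_halves ε

lemma IsFOC.exists_ball_subset [CompactSpace X] (h𝒰 : IsFOC 𝒰) :
    ∃ δ > 0, ∀ y : X, ∃ U ∈ 𝒰, ball y δ ⊆ U := by
  obtain ⟨δ, hδ, h⟩ := lebesgue_number_lemma_of_metric_sUnion isCompact_univ h𝒰.1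
    h𝒰.2.symm.subset
  exact ⟨δ, hδ, fun y => h y (Set.mem_univ y)⟩

lemma IsPseudoOrbit.isMetricPseudoOrbit (h𝒰 : ∀ U ∈ 𝒰, ∀ a ∈ U, ∀ b ∈ U, dist a b < ε)
    (hx : IsPseudoOrbit Φ S 𝒰 x) : IsMetricPseudoOrbit Φ S ε x := by
  obtain ⟨U, hU, hpattern⟩ := hx
  intro g s hs
  exact h𝒰 _ (hU (s * g)) _ (hpattern g s hs).2 _ (hpattern g s hs).1

lemma IsMetricPseudoOrbit.isPseudoOrbit (h𝒰 : ∀ y : X, ∃ U ∈ 𝒰, ball y ε ⊆ U)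
    (hε : 0 < ε) (hx : IsMetricPseudoOrbit Φ S ε x) : IsPseudoOrbit Φ S 𝒰 x := by
  choose U hU hball using fun g => h𝒰 (x g)
  refine ⟨U, hU, fun g s hs => ⟨hball _ (mem_ball_self hε), hball _ ?_⟩⟩
  exact mem_ball.2 (hx g s hs)

lemma Shadows.dist_lt (h𝒰 : ∀ U ∈ 𝒰, ∀ a ∈ U, ∀ b ∈ U, dist a b < ε)
    (hz : Shadows Φ 𝒰 z x) (g : G) : dist (Φ.act g z) (x g) < ε := by
  obtain ⟨U, hU, hzU, hxU⟩ := hz g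
  exact h𝒰 U hU _ hzU _ hxU

lemma shadows_of_dist_lt (h𝒰 : ∀ y : X, ∃ U ∈ 𝒰, ball y ε ⊆ U) (hε : 0 < ε)
    (hz : ∀ g : G, dist (Φ.act g z) (x g) < ε) : Shadows Φ 𝒰 z x := by
  intro g
  obtain ⟨U, hU, hball⟩ := h𝒰 (Φ.act g z)
  exact ⟨U, hU, hball (mem_ball_self hε), hball (mem_ball'.2 (hz g))⟩

variable [CompactSpace X]

lemma MetricShadowing.shadowingProperty (hΦ : MetricShadowing Φ S) : ShadowingProperty Φ S := by
  intro 𝒰 h𝒰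
  obtain ⟨ε, hε, h𝒰ε⟩ := h𝒰.exists_ball_subset
  obtain ⟨δ, hδ, hshadow⟩ := hΦ ε hε
  obtain ⟨𝒱, h𝒱, h𝒱δ⟩ := exists_isFOC_forall_dist_lt (X := X) hδ
  refine ⟨𝒱, h𝒱, fun x hx => ?_⟩
  obtain ⟨z, hz⟩ := hshadow x (hx.isMetricPseudoOrbit h𝒱δ)
  exact ⟨z, shadows_of_dist_lt h𝒰ε hε hz⟩

lemma ShadowingProperty.metricShadowing (hΦ : ShadowingProperty Φ S) : MetricShadowing Φ S := by
  intro ε hε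
  obtain ⟨𝒰, h𝒰, h𝒰ε⟩ := exists_isFOC_forall_dist_lt (X := X) hε
  obtain ⟨𝒱, h𝒱, hshadow⟩ := hΦ 𝒰 h𝒰
  obtain ⟨δ, hδ, h𝒱δ⟩ := h𝒱.exists_ball_subset
  refine ⟨δ, hδ, fun x hx => ?_⟩
  obtain ⟨z, hz⟩ := hshadow x (hx.isPseudoOrbit h𝒱δ hδ)
  exact ⟨z, hz.dist_lt h𝒰ε⟩

end CoverShadowing

theorem metric_shadowing_iff_cover_shadowing_general
    {G X : Type} [Group G] [MetricSpace X] [CompactSpace X]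
    (Φ : DynAction G X) (S : Set G) :
    MetricShadowing Φ S ↔ ShadowingProperty Φ S :=
  ⟨MetricShadowing.shadowingProperty, ShadowingProperty.metricShadowing⟩

/-- **Lemma 3.3.** For a compact metric space, the metric `S`-shadowing property is
equivalent to the topological (finite-open-cover) `S`-shadowing property. -/
theorem metric_shadowing_iff_cover_shadowing
    {G X : Type} [Group G] [Countable G] [MetricSpace X] [CompactSpace X]
    (Φ : DynAction G X) (S : Set G) :
    MetricShadowing Φ S ↔ ShadowingProperty Φ S :=
  metric_shadowing_iff_cover_shadowing_general Φ S
end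

section
/- Let (X, G, Φ) be a dynamical system and let {𝒰_λ}_{λ∈Λ} be a cofinal directed subset of the collection of finite open covers of X (ordered by refinement). Then for any x ∈ X and any choice of U_λ(x) ∈ 𝒰_λ with x ∈ U_λ(x) for each λ ∈ Λ, one has {x} = ∩_{λ∈Λ} U_λ(x), and for each g ∈ G, {Φ_g(x)} = ∩_{λ∈Λ} ⋃{π_{e_G}(σ_g(u)) : u ∈ 𝒪(𝒰_λ), π_{e_G}(u) = U_λ(x)}, where the inner union is taken over the indicated members of 𝒰_λ regarded as subsets of X. -/
open Set

universe u

/-! ### Orbit spaces and pseudo-orbit spaces of finite covers -/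

/-- An element of the finite cover `𝒰`, regarded as a letter of a (discrete) finite
alphabet. -/
structure CoverElt {X : Type u} (𝒰 : Finset (Set X)) where
  val : Set X
  mem : val ∈ 𝒰

instance {X : Type u} (𝒰 : Finset (Set X)) : TopologicalSpace (CoverElt 𝒰) := ⊥
instance {X : Type u} (𝒰 : Finset (Set X)) : DiscreteTopology (CoverElt 𝒰) := ⟨rfl⟩
instance {X : Type u} (𝒰 : Finset (Set X)) : Finite (CoverElt 𝒰) :=
  Finite.of_injective (fun e => (⟨e.val, e.mem⟩ : {U : Set X // U ∈ 𝒰}))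
    (fun a b hab => by cases a; cases b; simpa using hab)

/-- The `𝒰`-orbit space `𝒪(𝒰)`: the closure in the full shift `𝒰^G` of the set of
orbit patterns. -/
def orbitSpace {G X : Type u} [Group G] [TopologicalSpace X]
    (Φ : DynAction G X) (𝒰 : Finset (Set X)) : Set (G → CoverElt 𝒰) :=
  closure {u : G → CoverElt 𝒰 | (⋂ g : G, Φ.act g⁻¹ '' (u g).val).Nonempty}

/-- The `(S,𝒰)`-pseudo-orbit space `𝒫𝒪_S(𝒰)`: all patterns of `(S,𝒰)`-pseudo-orbits. -/
def psOrbitSpace {G X : Type u} [Group G] [TopologicalSpace X]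
    (Φ : DynAction G X) (S : Set G) (𝒰 : Finset (Set X)) : Set (G → CoverElt 𝒰) :=
  {u : G → CoverElt 𝒰 | ∃ x : G → X, IsPseudoOrbitPattern Φ S 𝒰 x (fun g => (u g).val)}

/-! Refining the cover `{V, {x}ᶜ}` shows that in a cofinal family the members through `x`
eventually lie in any neighbourhood `V` of `x`; this pins down `x`. Since cylinders over the
finite window `{e, g}` are open in `𝒰^G`, every `u ∈ 𝒪(𝒰)` with `u(e) = U` is realised on that
window by a genuine point `w ∈ U`, i.e. `Φ_g w ∈ u(g)`. So if `y ≠ Φ_g x` lay in every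
intersectand, separating `Φ_g x` from `y` by disjoint open sets and taking `𝒰_λ` fine at both
`x` and `y` would put `Φ_g w` in both. -/

section OrbitSpace

variable {G X : Type u} [Group G] [TopologicalSpace X]

namespace DynAction

variable (Φ : DynAction G X)

lemma act_act_inv (g : G) (y : X) : Φ.act g (Φ.act g⁻¹ y) = y := by
  rw [← Φ.act_mul, mul_inv_cancel, Φ.act_one]

lemma act_inv_act (g : G) (y : X) : Φ.act g⁻¹ (Φ.act g y) = y := by
  rw [← Φ.act_mul, inv_mul_cancel, Φ.act_one]

lemma mem_act_inv_image_iff (g : G) (A : Set X) (w : X) :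
    w ∈ Φ.act g⁻¹ '' A ↔ Φ.act g w ∈ A := by
  constructor
  · rintro ⟨y, hy, rfl⟩
    rwa [Φ.act_act_inv]
  · exact fun h => ⟨Φ.act g w, h, Φ.act_inv_act g w⟩

end DynAction

variable (Φ : DynAction G X) {𝒰 : Finset (Set X)}

lemma mem_orbitSpace_of_forall_act_mem {u : G → CoverElt 𝒰} (x : X)
    (hx : ∀ g, Φ.act g x ∈ (u g).val) : u ∈ orbitSpace Φ 𝒰 :=
  subset_closure ⟨x, mem_iInter.mpr fun g => (Φ.mem_act_inv_image_iff g _ x).mpr (hx g)⟩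

lemma exists_forall_act_mem_of_mem_orbitSpace {u : G → CoverElt 𝒰}
    (hu : u ∈ orbitSpace Φ 𝒰) (F : Finset G) :
    ∃ w : X, ∀ h ∈ F, Φ.act h w ∈ (u h).val := by
  have hcyl : IsOpen ((F : Set G).pi fun h => ({u h} : Set (CoverElt 𝒰))) :=
    isOpen_set_pi F.finite_toSet fun _ _ => isOpen_discrete _
  obtain ⟨v, hvu, w, hw⟩ :=
    mem_closure_iff.mp hu _ hcyl (Set.mem_pi.mpr fun h _ => rfl)
  refine ⟨w, fun h hh => ?_⟩
  rw [← (hvu h hh : v h = u h)]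
  exact (Φ.mem_act_inv_image_iff h _ w).mp (mem_iInter.mp hw h)

/-- The set `⋃ {π_e(σ_g u) : u ∈ 𝒪(𝒰), π_e(u) = A}`. -/
def orbitSpaceFollowers (𝒰 : Finset (Set X)) (A : Set X) (g : G) : Set X :=
  ⋃ u ∈ orbitSpace Φ 𝒰, ⋃ (_ : (u 1).val = A), (shift G (CoverElt 𝒰) g u 1).val

lemma act_mem_orbitSpaceFollowers (h𝒰 : ⋃₀ (𝒰 : Set (Set X)) = univ) {A : Set X}
    (hA : A ∈ 𝒰) {x : X} (hxA : x ∈ A) (g : G) :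
    Φ.act g x ∈ orbitSpaceFollowers Φ 𝒰 A g := by
  classical
  choose W hW hpW using sUnion_eq_univ_iff.mp h𝒰
  let u : G → CoverElt 𝒰 := Function.update (fun h => ⟨W (Φ.act h x), hW _⟩) 1 ⟨A, hA⟩
  have hu : ∀ h, Φ.act h x ∈ (u h).val := by
    intro h
    rcases eq_or_ne h 1 with rfl | hh
    · simpa [u, Φ.act_one] using hxA
    · simpa [u, hh] using hpW _
  refine mem_iUnion₂.mpr ⟨u, mem_orbitSpace_of_forall_act_mem Φ x hu, ?_⟩
  refine mem_iUnion.mpr ⟨by simp [u], ?_⟩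
  simpa only [shift, one_mul] using hu g

lemma exists_of_mem_orbitSpaceFollowers {A : Set X} {g : G} {y : X}
    (hy : y ∈ orbitSpaceFollowers Φ 𝒰 A g) :
    ∃ w ∈ A, ∃ B ∈ 𝒰, y ∈ B ∧ Φ.act g w ∈ B := by
  classical
  obtain ⟨u, hu, hu1, hyu⟩ := by simpa only [orbitSpaceFollowers, mem_iUnion] using hy
  obtain ⟨w, hw⟩ := exists_forall_act_mem_of_mem_orbitSpace Φ hu {1, g}
  have hw1 := hw 1 (by simp)
  rw [Φ.act_one, hu1] at hw1
  exact ⟨w, hw1, (u g).val, (u g).mem, by simpa only [shift, one_mul] using hyu, hw g (by simp)⟩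

end OrbitSpace

section CofinalCovers

variable {X : Type u}

lemma Refines.trans {𝒲 𝒱 𝒰 : Finset (Set X)} (h₁ : Refines 𝒲 𝒱) (h₂ : Refines 𝒱 𝒰) :
    Refines 𝒲 𝒰 := by
  intro W hW
  obtain ⟨V, hV, hWV⟩ := h₁ W hW
  obtain ⟨U, hU, hVU⟩ := h₂ V hV
  exact ⟨U, hU, hWV.trans hVU⟩

lemma Refines.subset_of_mem {𝒲 𝒱 : Finset (Set X)} (h : Refines 𝒲 𝒱) {x : X} {V : Set X}
    (hV : ∀ B ∈ 𝒱, x ∈ B → B ⊆ V) : ∀ A ∈ 𝒲, x ∈ A → A ⊆ V := by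
  intro A hA hxA
  obtain ⟨B, hB, hAB⟩ := h A hA
  exact hAB.trans (hV B hB (hAB hxA))

variable [TopologicalSpace X]

lemma isFOC_pair_compl_singleton [T1Space X] {V : Set X} (hV : IsOpen V) {x : X}
    (hxV : x ∈ V) : IsFOC ({V, {x}ᶜ} : Finset (Set X)) := by
  refine ⟨?_, eq_univ_of_forall fun p => ?_⟩
  · simp only [Finset.mem_insert, Finset.mem_singleton]
    rintro U (rfl | rfl)
    exacts [hV, isOpen_compl_singleton]
  · rcases eq_or_ne p x with rfl | hp
    · exact ⟨V, by simp, hxV⟩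
    · exact ⟨{x}ᶜ, by simp, hp⟩

variable {Λ : Type*} {𝒰 : Λ → Finset (Set X)}

lemma exists_forall_subset_of_isOpen [T1Space X]
    (hcof : ∀ 𝒱 : Finset (Set X), IsFOC 𝒱 → ∃ l, Refines (𝒰 l) 𝒱)
    {V : Set X} (hV : IsOpen V) {x : X} (hxV : x ∈ V) :
    ∃ l, ∀ A ∈ 𝒰 l, x ∈ A → A ⊆ V := by
  obtain ⟨l, hl⟩ := hcof _ (isFOC_pair_compl_singleton hV hxV)
  refine ⟨l, hl.subset_of_mem fun B hB hxB => ?_⟩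
  rcases Finset.mem_insert.mp hB with rfl | hB
  · exact subset_rfl
  · rw [Finset.mem_singleton.mp hB] at hxB
    exact absurd rfl hxB

lemma exists_forall_subset_of_isOpen₂ [T1Space X]
    (hdir : ∀ l m : Λ, ∃ n, Refines (𝒰 n) (𝒰 l) ∧ Refines (𝒰 n) (𝒰 m))
    (hcof : ∀ 𝒱 : Finset (Set X), IsFOC 𝒱 → ∃ l, Refines (𝒰 l) 𝒱)
    {V W : Set X} (hV : IsOpen V) (hW : IsOpen W) {x y : X} (hxV : x ∈ V) (hyW : y ∈ W) :
    ∃ n, (∀ A ∈ 𝒰 n, x ∈ A → A ⊆ V) ∧ (∀ A ∈ 𝒰 n, y ∈ A → A ⊆ W) := by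
  obtain ⟨l, hl⟩ := exists_forall_subset_of_isOpen hcof hV hxV
  obtain ⟨m, hm⟩ := exists_forall_subset_of_isOpen hcof hW hyW
  obtain ⟨n, hnl, hnm⟩ := hdir l m
  exact ⟨n, hnl.subset_of_mem hl, hnm.subset_of_mem hm⟩

end CofinalCovers

theorem point_and_orbit_encoded_by_orbitSpaces_general
    {G X : Type} [Group G] [TopologicalSpace X]
    [T2Space X]
    (Φ : DynAction G X) {Λ : Type} (𝒰 : Λ → Finset (Set X))
    (hFOC : ∀ l : Λ, IsFOC (𝒰 l))
    (hdir : ∀ l m : Λ, ∃ n : Λ, Refines (𝒰 n) (𝒰 l) ∧ Refines (𝒰 n) (𝒰 m))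
    (hcof : ∀ 𝒱 : Finset (Set X), IsFOC 𝒱 → ∃ l : Λ, Refines (𝒰 l) 𝒱)
    (x : X) (U : ∀ l : Λ, Set X) (hUmem : ∀ l : Λ, U l ∈ 𝒰 l)
    (hxU : ∀ l : Λ, x ∈ U l) :
    (⋂ l : Λ, U l) = {x} ∧
    ∀ g : G,
      (⋂ l : Λ, ⋃ u ∈ orbitSpace Φ (𝒰 l),
        ⋃ (_ : (u (1 : G)).val = U l), (shift G (CoverElt (𝒰 l)) g u (1 : G)).val)
      = {Φ.act g x} := by
  refine ⟨eq_singleton_iff_unique_mem.mpr ⟨mem_iInter.mpr hxU, fun y hy => ?_⟩, fun g => ?_⟩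
  · by_contra hyx
    obtain ⟨l, hl⟩ := exists_forall_subset_of_isOpen hcof isOpen_compl_singleton
      (Ne.symm hyx : x ∈ ({y}ᶜ : Set X))
    exact hl (U l) (hUmem l) (hxU l) (mem_iInter.mp hy l) rfl
  change (⋂ l, orbitSpaceFollowers Φ (𝒰 l) (U l) g) = {Φ.act g x}
  refine eq_singleton_iff_unique_mem.mpr ⟨mem_iInter.mpr fun l =>
    act_mem_orbitSpaceFollowers Φ (hFOC l).2 (hUmem l) (hxU l) g, fun y hy => ?_⟩
  by_contra hy_ne
  obtain ⟨V, W, hV, hW, hgxV, hyW, hVW⟩ := t2_separation (Ne.symm hy_ne)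
  obtain ⟨n, hnx, hny⟩ :=
    exists_forall_subset_of_isOpen₂ hdir hcof (hV.preimage (Φ.continuous_act g)) hW hgxV hyW
  obtain ⟨w, hw, B, hB, hyB, hgwB⟩ := exists_of_mem_orbitSpaceFollowers Φ (mem_iInter.mp hy n)
  exact hVW.le_bot ⟨hnx (U n) (hUmem n) (hxU n) hw, hny B hB hyB hgwB⟩

/-- **Theorem 3.7.** For a cofinal directed family of finite open covers, points and
their orbits are encoded by the orbit spaces of these covers. -/
theorem point_and_orbit_encoded_by_orbitSpaces
    {G X : Type} [Group G] [Countable G] [TopologicalSpace X]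
    [CompactSpace X] [T2Space X]
    (Φ : DynAction G X) {Λ : Type} (𝒰 : Λ → Finset (Set X))
    (hFOC : ∀ l : Λ, IsFOC (𝒰 l))
    (hdir : ∀ l m : Λ, ∃ n : Λ, Refines (𝒰 n) (𝒰 l) ∧ Refines (𝒰 n) (𝒰 m))
    (hcof : ∀ 𝒱 : Finset (Set X), IsFOC 𝒱 → ∃ l : Λ, Refines (𝒰 l) 𝒱)
    (x : X) (U : ∀ l : Λ, Set X) (hUmem : ∀ l : Λ, U l ∈ 𝒰 l)
    (hxU : ∀ l : Λ, x ∈ U l) :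
    (⋂ l : Λ, U l) = {x} ∧
    ∀ g : G,
      (⋂ l : Λ, ⋃ u ∈ orbitSpace Φ (𝒰 l),
        ⋃ (_ : (u (1 : G)).val = U l), (shift G (CoverElt (𝒰 l)) g u (1 : G)).val)
      = {Φ.act g x} :=
  point_and_orbit_encoded_by_orbitSpaces_general Φ 𝒰 hFOC hdir hcof x U hUmem hxU
end

section
/- Let (X, G, Φ^X) and (Y, G, Φ^Y) be dynamical systems and let S be a finite subset of G. If Φ^X has the S-shadowing property and φ : X → Y is a factor map which lifts pseudo-orbits for S, then Φ^Y has the S-shadowing property. -/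
open Set

universe u

/-! ### Lifting pseudo-orbits along factor maps -/

/-- `φ` lifts pseudo-orbits for `S`. -/
def LiftsPseudoOrbits {G X Y : Type u} [Group G] [TopologicalSpace X] [TopologicalSpace Y]
    (ΦX : DynAction G X) (ΦY : DynAction G Y) (φ : X → Y) (S : Set G) : Prop :=
  ∀ 𝒰X : Finset (Set X), IsFOC 𝒰X → ∃ 𝒰Y : Finset (Set Y), IsFOC 𝒰Y ∧
    ∀ y : G → Y, IsPseudoOrbit ΦY S 𝒰Y y →
      ∃ x : G → X, IsPseudoOrbit ΦX S 𝒰X x ∧ ∀ g : G, φ (x g) = y g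

/-- `φ` almost lifts pseudo-orbits for `S`. -/
def AlmostLiftsPseudoOrbits {G X Y : Type u} [Group G] [TopologicalSpace X]
    [TopologicalSpace Y] (ΦX : DynAction G X) (ΦY : DynAction G Y)
    (φ : X → Y) (S : Set G) : Prop :=
  ∀ 𝒰X : Finset (Set X), IsFOC 𝒰X → ∀ 𝒲Y : Finset (Set Y), IsFOC 𝒲Y →
    ∃ 𝒰Y : Finset (Set Y), IsFOC 𝒰Y ∧
      ∀ y : G → Y, IsPseudoOrbit ΦY S 𝒰Y y →
        ∃ x : G → X, IsPseudoOrbit ΦX S 𝒰X x ∧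
          ∀ g : G, ∃ W ∈ 𝒲Y, φ (x g) ∈ W ∧ y g ∈ W

/-! A point shadowing a lifted pseudo-orbit with respect to the cover pulled back along `φ`
projects, by equivariance, to a point shadowing the original pseudo-orbit in `Y`. -/

section Pullback

variable {G X Y : Type u} [Group G] [TopologicalSpace X] [TopologicalSpace Y]
  [DecidableEq (Set X)]

theorem IsFOC.image_preimage {𝒰 : Finset (Set Y)} (h𝒰 : IsFOC 𝒰) {f : X → Y}
    (hf : Continuous f) : IsFOC (𝒰.image (f ⁻¹' ·)) := by
  refine ⟨?_, Set.eq_univ_of_forall fun x => ?_⟩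
  · simp only [Finset.mem_image]
    rintro _ ⟨V, hV, rfl⟩
    exact (h𝒰.1 V hV).preimage hf
  · obtain ⟨V, hV, hxV⟩ : f x ∈ ⋃₀ (𝒰 : Set (Set Y)) := h𝒰.2 ▸ Set.mem_univ _
    exact ⟨f ⁻¹' V, Finset.mem_image_of_mem _ hV, hxV⟩

theorem Shadows.map {ΦX : DynAction G X} {ΦY : DynAction G Y} {f : X → Y}
    (hf : IsEquivariant ΦX ΦY f) {𝒰 : Finset (Set Y)} {z : X} {x : G → X}
    (hz : Shadows ΦX (𝒰.image (f ⁻¹' ·)) z x) : Shadows ΦY 𝒰 (f z) (f ∘ x) := by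
  intro g
  obtain ⟨_, hU, hzU, hxU⟩ := hz g
  obtain ⟨V, hV, rfl⟩ := Finset.mem_image.1 hU
  exact ⟨V, hV, hf g z ▸ hzU, hxU⟩

end Pullback

theorem shadowing_of_factor_lifting_general
    {G X Y : Type} [Group G]
    [TopologicalSpace X]
    [TopologicalSpace Y]
    (ΦX : DynAction G X) (ΦY : DynAction G Y) (S : Finset G)
    (φ : X → Y) (hφ : IsFactorMap ΦX ΦY φ)
    (hX : ShadowingProperty ΦX (S : Set G))
    (hlift : LiftsPseudoOrbits ΦX ΦY φ (S : Set G)) :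
    ShadowingProperty ΦY (S : Set G) := by
  classical
  intro 𝒰 h𝒰
  obtain ⟨𝒱X, h𝒱X, hshadow⟩ := hX _ (h𝒰.image_preimage hφ.1)
  obtain ⟨𝒱Y, h𝒱Y, hliftY⟩ := hlift 𝒱X h𝒱X
  refine ⟨𝒱Y, h𝒱Y, fun y hy => ?_⟩
  obtain ⟨x, hx, hxy⟩ := hliftY y hy
  obtain ⟨z, hz⟩ := hshadow x hx
  have hφx : φ ∘ x = y := funext hxy
  exact ⟨φ z, hφx ▸ hz.map hφ.2.2⟩

/-- **Theorem 5.2.** If `Φ^X` has the `S`-shadowing property and `φ` is a factor map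
which lifts pseudo-orbits for `S`, then `Φ^Y` has the `S`-shadowing property. -/
theorem shadowing_of_factor_lifting
    {G X Y : Type} [Group G] [Countable G]
    [TopologicalSpace X] [CompactSpace X] [T2Space X]
    [TopologicalSpace Y] [CompactSpace Y] [T2Space Y]
    (ΦX : DynAction G X) (ΦY : DynAction G Y) (S : Finset G)
    (φ : X → Y) (hφ : IsFactorMap ΦX ΦY φ)
    (hX : ShadowingProperty ΦX (S : Set G))
    (hlift : LiftsPseudoOrbits ΦX ΦY φ (S : Set G)) :
    ShadowingProperty ΦY (S : Set G) :=
  shadowing_of_factor_lifting_general ΦX ΦY S φ hφ hX hlift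
end
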